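/- Splitting a vertex cannot increase ν: if G̃ is obtained from a finite graph G by splitting a vertex x of degree d₁ + d₂ into two non-adjacent vertices x₁, x₂, where x₁ is joined to d₁ of the former neighbours of x and x₂ to the other d₂, then ν(G) ≥ ν(G̃). -/

import Mathlib

open Finset

variable {V : Type*} [Fintype V] {W : Type*} [Fintype W]

open scoped Classical in
noncomputable def magEnergy (G : SimpleGraph V) (σ : V → V → ℂ) (f : V → ℂ) : ℝ :=
  (1/2) * ∑ x : V, ∑ y : V, if G.Adj x y then ‖f x - σ x y * f y‖ ^ 2 else 0

noncomputable def magDenom (f : V → ℂ) : ℝ := ∑ x : V, ‖f x‖ ^ 2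

noncomputable def lambda1 (G : SimpleGraph V) (σ : V → V → ℂ) : ℝ :=
  sInf { r : ℝ | ∃ f : V → ℂ, f ≠ 0 ∧ r = magEnergy G σ f / magDenom f }

def IsMagPotential (G : SimpleGraph V) (σ : V → V → ℂ) : Prop :=
  (∀ x y, G.Adj x y → ‖σ x y‖ = 1) ∧
  (∀ x y, G.Adj x y → σ y x = (σ x y)⁻¹)

noncomputable def magHeight (G : SimpleGraph V) : ℝ :=
  sSup { r : ℝ | ∃ σ : V → V → ℂ, IsMagPotential G σ ∧ r = lambda1 G σ }

open scoped Classical in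
noncomputable def magLap (G : SimpleGraph V) (σ : V → V → ℂ) (f : V → ℂ) : V → ℂ :=
  fun x => ∑ y : V, if G.Adj x y then f x - σ x y * f y else 0

/-!
Merging `x₁` and `x₂` back into `x` is a graph homomorphism `φ : G̃ →g G` that is bijective on
oriented edges. A magnetic potential on `G̃` therefore transports along `φ` to one on `G`, and for
every `f : V → ℂ` the pullback `f ∘ φ` has the same magnetic energy as `f` while its `ℓ²` norm can
only be larger (`f x` is counted twice). Hence every `λ₁` of `G̃` is bounded by a `λ₁` of `G`.
-/

open Function

section Rayleigh

variable (G : SimpleGraph V) (σ : V → V → ℂ)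

lemma magDenom_nonneg (f : V → ℂ) : 0 ≤ magDenom f :=
  sum_nonneg fun _ _ => by positivity

lemma magDenom_pos {f : V → ℂ} (hf : f ≠ 0) : 0 < magDenom f := by
  obtain ⟨v, hv⟩ := Function.ne_iff.mp hf
  exact sum_pos' (fun _ _ => by positivity) ⟨v, mem_univ v, by positivity⟩

lemma magDenom_le_magDenom_comp {φ : W → V} (hφ : Surjective φ) (f : V → ℂ) :
    magDenom f ≤ magDenom (f ∘ φ) := by
  have hsec : Injective (surjInv hφ) := injective_surjInv hφ
  calc magDenom f = ∑ w ∈ univ.map ⟨surjInv hφ, hsec⟩, ‖f (φ w)‖ ^ 2 := by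
        simp only [magDenom, sum_map, Embedding.coeFn_mk, surjInv_eq hφ]
    _ ≤ magDenom (f ∘ φ) := sum_le_univ_sum_of_nonneg fun _ => by positivity

lemma magEnergy_nonneg (f : V → ℂ) : 0 ≤ magEnergy G σ f := by
  unfold magEnergy
  refine mul_nonneg (by norm_num) (sum_nonneg fun u _ => sum_nonneg fun v _ => ?_)
  split_ifs <;> positivity

lemma magEnergy_le_of_isMagPotential (hσ : IsMagPotential G σ) (f : V → ℂ) :
    magEnergy G σ f ≤ 2 * Fintype.card V * magDenom f := by
  classical
  have hterm : ∀ u v, (if G.Adj u v then ‖f u - σ u v * f v‖ ^ 2 else 0) ≤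
      2 * ‖f u‖ ^ 2 + 2 * ‖f v‖ ^ 2 := by
    intro u v
    split_ifs with h
    · have : ‖f u - σ u v * f v‖ ≤ ‖f u‖ + ‖f v‖ := by
        simpa [hσ.1 u v h] using norm_sub_le (f u) (σ u v * f v)
      nlinarith [norm_nonneg (f u - σ u v * f v), sq_nonneg (‖f u‖ - ‖f v‖)]
    · positivity
  calc magEnergy G σ f ≤ (1 / 2) * ∑ u : V, ∑ v : V, (2 * ‖f u‖ ^ 2 + 2 * ‖f v‖ ^ 2) := by
        unfold magEnergy
        gcongr with u _ v _
        convert hterm u v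
    _ = 2 * Fintype.card V * magDenom f := by
        simp only [magDenom, sum_add_distrib, sum_const, card_univ, nsmul_eq_mul, ← mul_sum]
        ring

lemma lambda1_le_div {f : V → ℂ} (hf : f ≠ 0) : lambda1 G σ ≤ magEnergy G σ f / magDenom f :=
  csInf_le ⟨0, fun _ ⟨g, _, hr⟩ => hr ▸ div_nonneg (magEnergy_nonneg G σ g) (magDenom_nonneg g)⟩
    ⟨f, hf, rfl⟩

lemma lambda1_nonneg : 0 ≤ lambda1 G σ :=
  Real.sInf_nonneg <| by
    rintro r ⟨f, -, rfl⟩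
    exact div_nonneg (magEnergy_nonneg G σ f) (magDenom_nonneg f)

lemma lambda1_le_of_isMagPotential [Nonempty V] (hσ : IsMagPotential G σ) :
    lambda1 G σ ≤ 2 * Fintype.card V := by
  calc lambda1 G σ ≤ magEnergy G σ 1 / magDenom (1 : V → ℂ) := lambda1_le_div G σ one_ne_zero
    _ ≤ 2 * Fintype.card V :=
        div_le_of_le_mul₀ (magDenom_nonneg _) (by positivity)
          (magEnergy_le_of_isMagPotential G σ hσ 1)

lemma lambda1_le_magHeight [Nonempty V] (hσ : IsMagPotential G σ) :
    lambda1 G σ ≤ magHeight G :=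
  le_csSup ⟨2 * Fintype.card V, fun _ ⟨τ, hτ, hr⟩ => hr ▸ lambda1_le_of_isMagPotential G τ hτ⟩
    ⟨σ, hσ, rfl⟩

lemma magHeight_nonneg [Nonempty V] : 0 ≤ magHeight G :=
  (lambda1_nonneg G 1).trans <|
    lambda1_le_magHeight G 1 ⟨fun _ _ _ => by simp, fun _ _ _ => by simp⟩

lemma lambda1_le_lambda1_of_magEnergy_comp_le [Nonempty V] {G' : SimpleGraph W}
    {σ' : W → W → ℂ} {φ : W → V} (hφ : Surjective φ)
    (hE : ∀ f, magEnergy G' σ' (f ∘ φ) ≤ magEnergy G σ f) : lambda1 G' σ' ≤ lambda1 G σ := by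
  refine le_csInf ⟨_, 1, one_ne_zero, rfl⟩ ?_
  rintro r ⟨f, hf, rfl⟩
  have hfφ : f ∘ φ ≠ 0 := fun h => hf <| funext fun v => by
    simpa [surjInv_eq hφ] using congrFun h (surjInv hφ v)
  calc lambda1 G' σ' ≤ magEnergy G' σ' (f ∘ φ) / magDenom (f ∘ φ) := lambda1_le_div G' σ' hfφ
    _ ≤ magEnergy G σ f / magDenom f := by
        gcongr
        · exact magEnergy_nonneg G σ f
        · exact magDenom_pos hf
        · exact hE f
        · exact magDenom_le_magDenom_comp hφ f

end Rayleigh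

open scoped Classical in
lemma magEnergy_eq_sum_darts (G : SimpleGraph V) (σ : V → V → ℂ) (f : V → ℂ) :
    magEnergy G σ f = (1 / 2) * ∑ d : G.Dart, ‖f d.fst - σ d.fst d.snd * f d.snd‖ ^ 2 := by
  let e : G.Dart ≃ {p : V × V // G.Adj p.1 p.2} :=
    ⟨fun d => ⟨d.toProd, d.adj⟩, fun p => ⟨p.1, p.2⟩, fun _ => rfl, fun _ => rfl⟩
  rw [magEnergy, ← Fintype.sum_prod_type', ← sum_filter]
  congr 1
  exact (sum_subtype _ mem_filter_univ (fun p => ‖f p.1 - σ p.1 p.2 * f p.2‖ ^ 2)).trans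
    (Fintype.sum_equiv e _ _ fun _ => rfl).symm

section Pushforward

variable {α β : Type*} {G : SimpleGraph α} {G' : SimpleGraph β} (φ : G' →g G)
  (hφ : Bijective φ.mapDart)

open scoped Classical in
noncomputable def pushPotential (σ' : β → β → ℂ) (u v : α) : ℂ :=
  if h : G.Adj u v then
    let d := (Equiv.ofBijective _ hφ).symm ⟨(u, v), h⟩
    σ' d.fst d.snd
  else 1

lemma pushPotential_mapDart (σ' : β → β → ℂ) (d : G'.Dart) :
    pushPotential φ hφ σ' (φ d.fst) (φ d.snd) = σ' d.fst d.snd := by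
  rw [pushPotential, dif_pos (φ.map_adj d.adj)]
  exact congrArg (fun d' : G'.Dart => σ' d'.fst d'.snd)
    ((Equiv.ofBijective _ hφ).symm_apply_apply d)

lemma isMagPotential_pushPotential {σ' : β → β → ℂ} (hσ' : IsMagPotential G' σ') :
    IsMagPotential G (pushPotential φ hφ σ') := by
  constructor
  all_goals
    intro u v huv
    obtain ⟨d, hd⟩ := hφ.2 ⟨(u, v), huv⟩
    obtain ⟨rfl, rfl⟩ : (φ d.fst, φ d.snd) = (u, v) := congrArg SimpleGraph.Dart.toProd hd
  · rw [pushPotential_mapDart]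
    exact hσ'.1 _ _ d.adj
  · rw [pushPotential_mapDart, ← hσ'.2 _ _ d.adj]
    exact pushPotential_mapDart φ hφ σ' d.symm

lemma magEnergy_comp_eq [Fintype α] [Fintype β] (σ' : β → β → ℂ) (f : α → ℂ) :
    magEnergy G' σ' (f ∘ φ) = magEnergy G (pushPotential φ hφ σ') f := by
  classical
  rw [magEnergy_eq_sum_darts, magEnergy_eq_sum_darts]
  congr 1
  refine Fintype.sum_equiv (Equiv.ofBijective _ hφ) _ _ fun d => ?_
  change _ = ‖f (φ d.fst) - pushPotential φ hφ σ' (φ d.fst) (φ d.snd) * f (φ d.snd)‖ ^ 2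
  rw [pushPotential_mapDart]
  rfl

end Pushforward

theorem magHeight_le_of_bijective_mapDart {α β : Type*} [Fintype α] [Fintype β] [Nonempty α]
    {G : SimpleGraph α} {G' : SimpleGraph β} (φ : G' →g G) (hsurj : Surjective φ)
    (hφ : Bijective φ.mapDart) : magHeight G' ≤ magHeight G := by
  refine Real.sSup_le ?_ (magHeight_nonneg G)
  rintro r ⟨σ', hσ', rfl⟩
  calc lambda1 G' σ' ≤ lambda1 G (pushPotential φ hφ σ') :=
        lambda1_le_lambda1_of_magEnergy_comp_le G _ hsurj fun f => (magEnergy_comp_eq φ hφ σ' f).le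
    _ ≤ magHeight G := lambda1_le_magHeight G _ (isMagPotential_pushPotential φ hφ hσ')

section Split

variable {α : Type*} {G : SimpleGraph α} {x : α} {P : α → Prop} {G' : SimpleGraph (Option α)}

/-- `x` is split into `some x`, which keeps the neighbours satisfying `P`, and `none`, which takes
the others. -/
def IsVertexSplit (G : SimpleGraph α) (x : α) (P : α → Prop) (G' : SimpleGraph (Option α)) :
    Prop :=
  (∀ u v, G'.Adj (some u) (some v) ↔ G.Adj u v ∧ (u = x → P v) ∧ (v = x → P u)) ∧
  ∀ v, G'.Adj none (some v) ↔ G.Adj x v ∧ ¬ P v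

def IsVertexSplit.hom (h : IsVertexSplit G x P G') : G' →g G where
  toFun o := o.getD x
  map_rel' {a b} hab := by
    cases a <;> cases b
    · exact absurd hab G'.irrefl
    · exact ((h.2 _).1 hab).1
    · exact ((h.2 _).1 hab.symm).1.symm
    · exact ((h.1 _ _).1 hab).1

open scoped Classical in
/-- The endpoint over `u` of the dart of the split graph lying over the dart `(u, v)`. -/
noncomputable def splitLift (x : α) (P : α → Prop) (u v : α) : Option α :=
  if u = x ∧ ¬ P v then none else some u

lemma getD_splitLift (u v : α) : (splitLift x P u v).getD x = u := by
  unfold splitLift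
  split_ifs with h
  · exact h.1.symm
  · rfl

lemma IsVertexSplit.adj_splitLift (h : IsVertexSplit G x P G') {u v : α} (huv : G.Adj u v) :
    G'.Adj (splitLift x P u v) (splitLift x P v u) := by
  unfold splitLift
  by_cases hu : u = x ∧ ¬ P v
  · obtain ⟨rfl, hPv⟩ := hu
    rw [if_pos ⟨rfl, hPv⟩, if_neg fun hv => G.irrefl (hv.1 ▸ huv)]
    exact (h.2 v).2 ⟨huv, hPv⟩
  · by_cases hv : v = x ∧ ¬ P u
    · obtain ⟨rfl, hPu⟩ := hv
      rw [if_neg hu, if_pos ⟨rfl, hPu⟩]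
      exact ((h.2 u).2 ⟨huv.symm, hPu⟩).symm
    · rw [if_neg hu, if_neg hv]
      exact (h.1 u v).2 ⟨huv, fun hux => not_not.1 fun hPv => hu ⟨hux, hPv⟩,
        fun hvx => not_not.1 fun hPu => hv ⟨hvx, hPu⟩⟩

lemma IsVertexSplit.splitLift_getD_of_adj (h : IsVertexSplit G x P G') {a b : Option α}
    (hab : G'.Adj a b) : splitLift x P (a.getD x) (b.getD x) = a := by
  unfold splitLift
  cases a <;> cases b
  · exact absurd hab G'.irrefl
  · simp [((h.2 _).1 hab).2]
  · have hxu := ((h.2 _).1 hab.symm).1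
    rw [if_neg fun hu => G.irrefl (hu.1 ▸ hxu)]
    rfl
  · have hP := ((h.1 _ _).1 hab).2.1
    rw [if_neg fun hu => hu.2 (hP hu.1)]
    rfl

lemma IsVertexSplit.bijective_mapDart_hom (h : IsVertexSplit G x P G') :
    Bijective h.hom.mapDart := by
  constructor
  · intro d₁ d₂ hd
    obtain ⟨hfst, hsnd⟩ := Prod.ext_iff.1 (congrArg SimpleGraph.Dart.toProd hd)
    refine SimpleGraph.Dart.ext _ _ (Prod.ext ?_ ?_)
    · rw [← h.splitLift_getD_of_adj d₁.adj, ← h.splitLift_getD_of_adj d₂.adj]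
      exact congrArg₂ (splitLift x P) hfst hsnd
    · rw [← h.splitLift_getD_of_adj d₁.adj.symm, ← h.splitLift_getD_of_adj d₂.adj.symm]
      exact congrArg₂ (splitLift x P) hsnd hfst
  · intro d
    exact ⟨⟨(splitLift x P d.fst d.snd, splitLift x P d.snd d.fst), h.adj_splitLift d.adj⟩,
      SimpleGraph.Dart.ext _ _ (Prod.ext (getD_splitLift _ _) (getD_splitLift _ _))⟩

end Split

theorem magHeight_split_vertex (G : SimpleGraph V) (x : V) (P : V → Prop)
    (G' : SimpleGraph (Option V))
    (hss : ∀ u v, G'.Adj (some u) (some v) ↔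
      (G.Adj u v ∧ (u = x → P v) ∧ (v = x → P u)))
    (hns : ∀ v, G'.Adj none (some v) ↔ (G.Adj x v ∧ ¬ P v)) :
    magHeight G' ≤ magHeight G :=
  have : Nonempty V := ⟨x⟩
  have hsplit : IsVertexSplit G x P G' := ⟨hss, hns⟩
  magHeight_le_of_bijective_mapDart hsplit.hom (fun v => ⟨some v, rfl⟩)
    hsplit.bijective_mapDart_hom
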